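/- Let A: X → X* be continuous, linear, and monotone. Then the function 𝒞_A: X×X* → (−∞,+∞], (x,x*) ↦ q_{A₊}(x) + q_{A₊}*(x* − A∘x), is an autoconjugate representer for A. In particular, if A is symmetric, then 𝒞_A = q_A ⊕ q_A*, i.e. 𝒞_A(x,x*) = q_A(x) + q_A*(x*). -/

import Mathlib

noncomputable section
open scoped Classical
open Filter Topology

/-- The Fenchel conjugate of `F : X × X* → (-∞,+∞]`, as a function on `X* × X`:
`F*(x*,x) = sup_{(y,y*)} (⟨y,x*⟩ + ⟨x,y*⟩ - F(y,y*))`. -/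
def conj2 {X : Type*} [NormedAddCommGroup X] [NormedSpace ℝ X]
    (F : X × (X →L[ℝ] ℝ) → EReal) : (X →L[ℝ] ℝ) × X → EReal :=
  fun p => ⨆ q : X × (X →L[ℝ] ℝ), ((p.1 q.1 + q.2 p.2 : ℝ) : EReal) - F q

/-- `F` is autoconjugate: `F*(x*,x) = F(x,x*)` for all `(x,x*)`. -/
def Autoconjugate {X : Type*} [NormedAddCommGroup X] [NormedSpace ℝ X]
    (F : X × (X →L[ℝ] ℝ) → EReal) : Prop :=
  ∀ (x : X) (x' : X →L[ℝ] ℝ), conj2 F (x', x) = F (x, x')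

/-- `F` is a representer for the set-valued operator `A : X ⇉ X*`:
`gra A = {(x,x*) : F(x,x*) = ⟨x,x*⟩}`. -/
def IsRepresenter {X : Type*} [NormedAddCommGroup X] [NormedSpace ℝ X]
    (F : X × (X →L[ℝ] ℝ) → EReal) (A : X → Set (X →L[ℝ] ℝ)) : Prop :=
  ∀ (x : X) (x' : X →L[ℝ] ℝ), x' ∈ A x ↔ F (x, x') = ((x' x : ℝ) : EReal)

/-- A set-valued operator `A : X ⇉ X*` is monotone. -/
def MonotoneOp {X : Type*} [NormedAddCommGroup X] [NormedSpace ℝ X]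
    (A : X → Set (X →L[ℝ] ℝ)) : Prop :=
  ∀ ⦃x y : X⦄ ⦃x' y' : X →L[ℝ] ℝ⦄, x' ∈ A x → y' ∈ A y → 0 ≤ (x' - y') (x - y)

/-- A set-valued operator is maximal monotone if it is monotone and admits no proper
monotone extension (in the sense of graph inclusion). -/
def MaximalMonotoneOp {X : Type*} [NormedAddCommGroup X] [NormedSpace ℝ X]
    (A : X → Set (X →L[ℝ] ℝ)) : Prop :=
  MonotoneOp A ∧ ∀ B : X → Set (X →L[ℝ] ℝ), MonotoneOp B → (∀ x, A x ⊆ B x) → B = A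

/-- The quadratic function `q_A(x) = ½⟨x,Ax⟩` associated with a continuous linear
`A : X → X*`. -/
def qF {X : Type*} [NormedAddCommGroup X] [NormedSpace ℝ X]
    (A : X →L[ℝ] X →L[ℝ] ℝ) : X → ℝ :=
  fun x => (1 / 2) * A x x

/-- The Fenchel conjugate of a real-valued function `φ : X → ℝ`, as an `EReal`-valued
function on `X*`: `φ*(x*) = sup_y (⟨y,x*⟩ - φ(y))`. -/
def legendre {X : Type*} [NormedAddCommGroup X] [NormedSpace ℝ X]
    (φ : X → ℝ) : (X →L[ℝ] ℝ) → EReal :=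
  fun x' => ⨆ y : X, ((x' y - φ y : ℝ) : EReal)

/-- The symmetric part `A₊ = ½A + ½A*` of a continuous linear `A : X → X*`, where the
adjoint (restricted to `X`) is `A.flip`. -/
def symPart {X : Type*} [NormedAddCommGroup X] [NormedSpace ℝ X]
    (A : X →L[ℝ] X →L[ℝ] ℝ) : X →L[ℝ] X →L[ℝ] ℝ :=
  (1 / 2 : ℝ) • (A + A.flip)

/-- The antisymmetric part `A∘ = ½A - ½A*` of a continuous linear `A : X → X*`. -/
def antiPart {X : Type*} [NormedAddCommGroup X] [NormedSpace ℝ X]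
    (A : X →L[ℝ] X →L[ℝ] ℝ) : X →L[ℝ] X →L[ℝ] ℝ :=
  (1 / 2 : ℝ) • (A - A.flip)

/-- The Fitzpatrick function of a continuous linear `A : X → X*`:
`F_A(x,x*) = sup_y (⟨x,Ay⟩ + ⟨y,x*⟩ - ⟨y,Ay⟩)`. -/
def fitz {X : Type*} [NormedAddCommGroup X] [NormedSpace ℝ X]
    (A : X →L[ℝ] X →L[ℝ] ℝ) : X × (X →L[ℝ] ℝ) → EReal :=
  fun p => ⨆ y : X, ((A y p.1 + p.2 y - A y y : ℝ) : EReal)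

/-- The Ghoussoub autoconjugate function `𝒞_A(x,x*) = q_{A₊}(x) + q_{A₊}*(x* - A∘x)`
associated with a continuous linear monotone `A : X → X*`. -/
def ghoussoub {X : Type*} [NormedAddCommGroup X] [NormedSpace ℝ X]
    (A : X →L[ℝ] X →L[ℝ] ℝ) : X × (X →L[ℝ] ℝ) → EReal :=
  fun p => ((qF (symPart A) p.1 : ℝ) : EReal) + legendre (qF (symPart A)) (p.2 - antiPart A p.1)

/-!
Write `q = q_{A₊}` and `N = A∘`. Monotonicity makes `q` convex, so its gradient `A₊x` at `x`
is its only subgradient there and `q*(A₊x) = ⟨x, A₊x⟩ - q(x)`. Since `N` is skew, the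
Fenchel–Young inequality for `q` bounds every term of the supremum defining `𝒞_A*(x*, x)` by
`𝒞_A(x, x*)`, and the bound is attained at `y* = A₊x + N y`. Finally `𝒞_A(x, x*) = ⟨x, x*⟩`
says that `x* - N x` is a subgradient of `q` at `x`, i.e. `x* = A₊x + N x = A x`.
-/

namespace EReal

lemma coe_add_eq_coe_iff {a b : ℝ} {s : EReal} :
    (a : EReal) + s = b ↔ s = ((b - a : ℝ) : EReal) := by
  induction s using EReal.rec with
  | bot => simp [-EReal.coe_sub]
  | coe r =>
    norm_cast
    constructor <;> intro h <;> linarith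
  | top => simp [-EReal.coe_sub]

lemma coe_add_iSup_le {ι : Sort*} {c : ℝ} {f : ι → EReal} {t : EReal}
    (h : ∀ i, (c : EReal) + f i ≤ t) : (c : EReal) + ⨆ i, f i ≤ t := by
  rw [add_comm]
  refine EReal.add_le_of_le_sub (iSup_le fun i => ?_)
  rw [EReal.le_sub_iff_add_le (.inl (coe_ne_bot c)) (.inl (coe_ne_top c)), add_comm]
  exact h i

end EReal

section Legendre

variable {X : Type*} [NormedAddCommGroup X] [NormedSpace ℝ X]

lemma le_legendre (φ : X → ℝ) (x' : X →L[ℝ] ℝ) (y : X) :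
    ((x' y - φ y : ℝ) : EReal) ≤ legendre φ x' :=
  le_iSup (fun y => ((x' y - φ y : ℝ) : EReal)) y

lemma legendre_le_coe_iff {φ : X → ℝ} {x' : X →L[ℝ] ℝ} {c : ℝ} :
    legendre φ x' ≤ c ↔ ∀ y, x' y - φ y ≤ c :=
  iSup_le_iff.trans (forall_congr' fun _ => EReal.coe_le_coe_iff)

lemma legendre_eq_iff {φ : X → ℝ} {x' : X →L[ℝ] ℝ} {x : X} :
    legendre φ x' = ((x' x - φ x : ℝ) : EReal) ↔ ∀ y, x' y - φ y ≤ x' x - φ x :=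
  ⟨fun h => legendre_le_coe_iff.1 h.le,
    fun h => le_antisymm (legendre_le_coe_iff.2 h) (le_legendre φ x' x)⟩

theorem autoconjugate_add_legendre_sub_skew (φ : X → ℝ) (N : X →L[ℝ] X →L[ℝ] ℝ)
    (hN : ∀ x y, N x y = -N y x) (g : X → X →L[ℝ] ℝ)
    (hg : ∀ x y, g x y - φ y ≤ g x x - φ x) :
    Autoconjugate (fun p : X × (X →L[ℝ] ℝ) => (φ p.1 : EReal) + legendre φ (p.2 - N p.1)) := by
  intro x x'
  refine le_antisymm (iSup_le fun ⟨y, y'⟩ => ?_) (EReal.coe_add_iSup_le fun y => ?_)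
  · calc ((x' y + y' x : ℝ) : EReal) - ((φ y : EReal) + legendre φ (y' - N y))
        ≤ ((x' y + y' x : ℝ) : EReal) - ((φ y : EReal) + ((y' - N y) x - φ x : ℝ)) :=
          EReal.sub_le_sub le_rfl (by gcongr; exact le_legendre φ _ x)
      _ = (φ x : EReal) + (((x' - N x) y - φ y : ℝ) : EReal) := by
          norm_cast
          simp only [sub_apply, hN y x]
          ring
      _ ≤ (φ x : EReal) + legendre φ (x' - N x) := by gcongr; exact le_legendre φ _ y
  · -- the supremum is attained at `y' = g x + N y`, where `φ*(y' - N y) = g x x - φ x`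
    have hgx : legendre φ (g x) = ((g x x - φ x : ℝ) : EReal) := legendre_eq_iff.2 (hg x)
    calc (φ x : EReal) + (((x' - N x) y - φ y : ℝ) : EReal)
        = ((x' y + (g x + N y) x : ℝ) : EReal)
            - ((φ y : EReal) + legendre φ (g x + N y - N y)) := by
          rw [add_sub_cancel_right, hgx]
          norm_cast
          simp only [sub_apply, add_apply, hN y x]
          ring
      _ ≤ _ := le_iSup (fun q : X × (X →L[ℝ] ℝ) =>
          ((x' q.1 + q.2 x : ℝ) : EReal) - ((φ q.1 : EReal) + legendre φ (q.2 - N q.1)))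
          (y, g x + N y)

end Legendre

section Quadratic

variable {X : Type*} [NormedAddCommGroup X] [NormedSpace ℝ X] {P : X →L[ℝ] X →L[ℝ] ℝ}

lemma qF_add_smul (hP : ∀ x y, P x y = P y x) (x v : X) (t : ℝ) :
    qF P (x + t • v) = qF P x + t * P x v + t ^ 2 * qF P v := by
  simp only [qF, map_add, map_smul, add_apply, smul_apply, smul_eq_mul, hP v x]
  ring

lemma apply_sub_qF_le (hP : ∀ x y, P x y = P y x) (hmono : ∀ x, 0 ≤ P x x) (x y : X) :
    P x y - qF P y ≤ P x x - qF P x := by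
  have h := hmono (x - y)
  simp only [map_sub, sub_apply, hP y x] at h
  simp only [qF]
  linarith

lemma eq_of_forall_apply_sub_qF_le (hP : ∀ x y, P x y = P y x) {x : X} {g : X →L[ℝ] ℝ}
    (hg : ∀ y, g y - qF P y ≤ g x - qF P x) : g = P x := by
  ext v
  -- `t ↦ q_P (x + t • v) - g (x + t • v)` is a quadratic minimal at `t = 0`
  have hdisc : discrim (qF P v) (P x v - g v) 0 ≤ 0 := discrim_le_zero fun t => by
    have h := hg (x + t • v)
    rw [qF_add_smul hP, map_add, map_smul, smul_eq_mul] at h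
    linarith
  rw [discrim] at hdisc
  nlinarith [sq_nonneg (P x v - g v)]

end Quadratic

section SymAntiParts

variable {X : Type*} [NormedAddCommGroup X] [NormedSpace ℝ X] (A : X →L[ℝ] X →L[ℝ] ℝ)

lemma symPart_apply (x y : X) : symPart A x y = 1 / 2 * (A x y + A y x) := by
  simp [symPart, mul_add]

lemma antiPart_apply (x y : X) : antiPart A x y = 1 / 2 * (A x y - A y x) := by
  simp [antiPart]

lemma symPart_comm (x y : X) : symPart A x y = symPart A y x := by
  rw [symPart_apply, symPart_apply, add_comm]

lemma symPart_apply_self (x : X) : symPart A x x = A x x := by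
  rw [symPart_apply]
  ring

lemma antiPart_apply_swap (x y : X) : antiPart A x y = -antiPart A y x := by
  rw [antiPart_apply, antiPart_apply]
  ring

lemma symPart_add_antiPart_apply (x : X) : symPart A x + antiPart A x = A x := by
  ext y
  rw [add_apply, symPart_apply, antiPart_apply]
  ring

lemma symPart_eq_self (hA : ∀ x y, A x y = A y x) : symPart A = A := by
  ext x y
  rw [symPart_apply, hA y x]
  ring

lemma antiPart_eq_zero (hA : ∀ x y, A x y = A y x) : antiPart A = 0 := by
  ext x y
  rw [antiPart_apply, hA y x, zero_apply, zero_apply]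
  ring

end SymAntiParts

section Ghoussoub

variable {X : Type*} [NormedAddCommGroup X] [NormedSpace ℝ X] (A : X →L[ℝ] X →L[ℝ] ℝ)

lemma symPart_apply_self_nonneg (hmono : ∀ x, 0 ≤ A x x) (x : X) : 0 ≤ symPart A x x :=
  (symPart_apply_self A x).symm ▸ hmono x

theorem autoconjugate_ghoussoub (hmono : ∀ x, 0 ≤ A x x) : Autoconjugate (ghoussoub A) :=
  autoconjugate_add_legendre_sub_skew _ _ (antiPart_apply_swap A) (symPart A)
    (apply_sub_qF_le (symPart_comm A) (symPart_apply_self_nonneg A hmono))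

theorem isRepresenter_ghoussoub (hmono : ∀ x, 0 ≤ A x x) :
    IsRepresenter (ghoussoub A) (fun x => {x' | x' = A x}) := by
  intro x x'
  have hNxx : (x' - antiPart A x) x = x' x := by
    rw [sub_apply, antiPart_apply, sub_self, mul_zero, sub_zero]
  calc x' = A x ↔ x' - antiPart A x = symPart A x := by
        rw [sub_eq_iff_eq_add, symPart_add_antiPart_apply]
    _ ↔ ∀ y, (x' - antiPart A x) y - qF (symPart A) y
          ≤ (x' - antiPart A x) x - qF (symPart A) x :=
        ⟨fun h => h ▸ apply_sub_qF_le (symPart_comm A) (symPart_apply_self_nonneg A hmono) x,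
          eq_of_forall_apply_sub_qF_le (symPart_comm A)⟩
    _ ↔ ghoussoub A (x, x') = x' x := by
        rw [← legendre_eq_iff, hNxx, ← EReal.coe_add_eq_coe_iff]
        rfl

theorem ghoussoub_eq_of_symm (hA : ∀ x y, A x y = A y x) (x : X) (x' : X →L[ℝ] ℝ) :
    ghoussoub A (x, x') = (qF A x : EReal) + legendre (qF A) x' := by
  simp only [ghoussoub, symPart_eq_self A hA, antiPart_eq_zero A hA, zero_apply, sub_zero]

end Ghoussoub

theorem stmt6_general {X : Type*} [NormedAddCommGroup X] [NormedSpace ℝ X]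
    (A : X →L[ℝ] X →L[ℝ] ℝ)
    (hmono : ∀ x : X, 0 ≤ A x x) :
    Autoconjugate (ghoussoub A) ∧
    IsRepresenter (ghoussoub A) (fun x => {x' | x' = A x}) ∧
    ((∀ x y : X, A x y = A y x) →
      ∀ (x : X) (x' : X →L[ℝ] ℝ),
        ghoussoub A (x, x') = ((qF A x : ℝ) : EReal) + legendre (qF A) x') :=
  ⟨autoconjugate_ghoussoub A hmono, isRepresenter_ghoussoub A hmono, ghoussoub_eq_of_symm A⟩

/-- Corollary 2.7. For `A : X → X*` continuous, linear and monotone,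
`𝒞_A` is an autoconjugate representer for `A`; if moreover `A` is symmetric then
`𝒞_A = q_A ⊕ q_A*`. -/
theorem stmt6 {X : Type*} [NormedAddCommGroup X] [NormedSpace ℝ X] [CompleteSpace X]
    (hrefl : Function.Surjective (NormedSpace.inclusionInDoubleDual ℝ X))
    (A : X →L[ℝ] X →L[ℝ] ℝ)
    (hmono : ∀ x : X, 0 ≤ A x x) :
    Autoconjugate (ghoussoub A) ∧
    IsRepresenter (ghoussoub A) (fun x => {x' | x' = A x}) ∧
    ((∀ x y : X, A x y = A y x) →
      ∀ (x : X) (x' : X →L[ℝ] ℝ),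
        ghoussoub A (x, x') = ((qF A x : ℝ) : EReal) + legendre (qF A) x') :=
  stmt6_general A hmono
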